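/- Let A be a type (alphabet), possibly infinite, and ω : A → {1, 2, 3, …} a weight function, extended additively to the free monoid A* by ω(a_1⋯a_k) = ω(a_1) + ⋯ + ω(a_k). Define sets of words Z_n, C_n (n ≥ 1) recursively by: Z_1 = the set of single-letter words; C_n = {w ∈ Z_n : ω(w) = n}; Z_{n+1} = {w·u : w ∈ Z_n \ C_n, u ∈ C_n*}. Then the family (C_n)_{n≥1} is a factorization of A*: every word w ∈ A* admits a unique factorization w = u_1·u_2⋯u_r (r ≥ 0) with each u_t ∈ ⋃_n C_n and weights weakly increasing: ω(u_1) ≤ ω(u_2) ≤ ⋯ ≤ ω(u_r). -/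

import Mathlib

/-- The additive extension of a weight function `ω : A → ℕ` to words. -/
def FreeMonoid.wt {A : Type*} (ω : A → ℕ) (w : FreeMonoid A) : ℕ :=
  (w.toList.map ω).sum

/-- The sets `Z_n` of the Lazard right composition associated to a weighted
alphabet `(A, ω)`: `Z_1 = A`, `Z_{n+1} = (Z_n \ C_n)·C_n*` where
`C_n = {w ∈ Z_n : ω(w) = n}`.  (The value at `0` is junk, set to `∅`.) -/
def lazardZ {A : Type*} (ω : A → ℕ) : ℕ → Set (FreeMonoid A)
  | 0 => ∅
  | 1 => Set.range FreeMonoid.of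
  | (n + 2) =>
      {w | ∃ z ∈ lazardZ ω (n + 1), z.wt ω ≠ n + 1 ∧
        ∃ u ∈ Submonoid.closure
          {v | v ∈ lazardZ ω (n + 1) ∧ v.wt ω = n + 1}, w = z * u}

/-- The sets `C_n = {w ∈ Z_n : ω(w) = n}` of the Lazard right composition. -/
def lazardC {A : Type*} (ω : A → ℕ) (n : ℕ) : Set (FreeMonoid A) :=
  {w | w ∈ lazardZ ω n ∧ w.wt ω = n}

/-!
`Z_1` is a code, and whenever `X` is a code and `Y ⊆ X`, so is `(X \ Y) * Y*`: a product of
its elements is recovered from its expansion over `X` by cutting before every letter outside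
`Y`. Hence every `Z_n` is a code, and every element of `Z_n*` splits uniquely as an element of
`C_n*` followed by an element of `Z_{n+1}*`. Elements of `Z_n` have weight at least `n`, so
iterating the splitting from `Z_1* = A*` peels off the factors of weight `1, 2, …` and stops.
-/

open Pointwise

theorem List.eq_of_append_eq_append_of_forall_mem {α : Type*} {P : α → Prop} {p q u v : List α}
    (hp : ∀ x ∈ p, P x) (hq : ∀ x ∈ q, P x) (hu : ∀ x ∈ u.head?, ¬ P x)
    (hv : ∀ x ∈ v.head?, ¬ P x) (h : p ++ u = q ++ v) : p = q ∧ u = v := by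
  induction p generalizing q with
  | nil =>
    obtain _ | ⟨y, q⟩ := q
    · exact ⟨rfl, h⟩
    · subst h; exact (hu y rfl (hq y List.mem_cons_self)).elim
  | cons x p ih =>
    obtain _ | ⟨y, q⟩ := q
    · subst h; exact (hv x rfl (hp x List.mem_cons_self)).elim
    · simp only [List.cons_append, List.cons.injEq] at h
      obtain ⟨rfl, h⟩ := h
      obtain ⟨rfl, rfl⟩ := ih (fun z hz => hp z (List.mem_cons_of_mem x hz))
        (fun z hz => hq z (List.mem_cons_of_mem x hz)) h
      exact ⟨rfl, rfl⟩

theorem List.exists_eq_append_of_pairwise_le {α : Type*} {f : α → ℕ} {n : ℕ} {l : List α}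
    (hl : l.Pairwise (fun x y => f x ≤ f y)) (hn : ∀ x ∈ l, n ≤ f x) :
    ∃ p r, l = p ++ r ∧ (∀ x ∈ p, f x = n) ∧ ∀ x ∈ r, n < f x := by
  induction l with
  | nil => exact ⟨[], [], rfl, by simp, by simp⟩
  | cons x l ih =>
    rw [List.pairwise_cons] at hl
    obtain ⟨p, r, rfl, hp, hr⟩ := ih hl.2 fun y hy => hn y (List.mem_cons_of_mem x hy)
    by_cases hx : f x = n
    · exact ⟨x :: p, r, rfl, by simpa using ⟨hx, hp⟩, hr⟩
    · have hnx : n < f x := lt_of_le_of_ne (hn x List.mem_cons_self) (Ne.symm hx)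
      exact ⟨[], x :: (p ++ r), rfl, by simp,
        by simpa using ⟨hnx, fun y hy => hnx.trans_le (hl.1 y (List.mem_append.2 hy))⟩⟩

section Code

variable {M : Type*}

def IsChunk (X Y : Set M) : List M → Prop
  | [] => False
  | d :: cs => d ∈ X \ Y ∧ ∀ x ∈ cs, x ∈ Y

variable {X Y : Set M}

theorem IsChunk.forall_mem_append_flatten (hXY : Y ⊆ X) {p : List M} {S : List (List M)}
    (hp : ∀ x ∈ p, x ∈ Y) (hS : ∀ c ∈ S, IsChunk X Y c) : ∀ x ∈ p ++ S.flatten, x ∈ X := by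
  intro x hx
  obtain hx | hx := List.mem_append.1 hx
  · exact hXY (hp x hx)
  obtain ⟨c, hc, hxc⟩ := List.mem_flatten.1 hx
  obtain _ | ⟨d, cs⟩ := c
  · exact (hS [] hc).elim
  obtain rfl | hxc := List.mem_cons.1 hxc
  · exact (hS _ hc).1.1
  · exact hXY ((hS _ hc).2 x hxc)

theorem IsChunk.exists_append_flatten_of_forall_mem {s : List M} (hs : ∀ x ∈ s, x ∈ X) :
    ∃ (p : List M) (S : List (List M)), (∀ x ∈ p, x ∈ Y) ∧ (∀ c ∈ S, IsChunk X Y c) ∧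
      s = p ++ S.flatten := by
  induction s with
  | nil => exact ⟨[], [], by simp, by simp, rfl⟩
  | cons x s ih =>
    obtain ⟨p, S, hp, hS, rfl⟩ := ih fun y hy => hs y (List.mem_cons_of_mem x hy)
    by_cases hx : x ∈ Y
    · exact ⟨x :: p, S, by simpa using ⟨hx, hp⟩, hS, rfl⟩
    · refine ⟨[], (x :: p) :: S, by simp, ?_, rfl⟩
      simpa using ⟨⟨⟨hs x List.mem_cons_self, hx⟩, hp⟩, hS⟩

theorem IsChunk.head?_flatten_notMem {S : List (List M)} (hS : ∀ c ∈ S, IsChunk X Y c) :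
    ∀ x ∈ S.flatten.head?, x ∉ Y := by
  obtain _ | ⟨_ | ⟨d, cs⟩, S⟩ := S
  · simp
  · exact (hS [] List.mem_cons_self).elim
  · simpa using (hS _ List.mem_cons_self).1.2

theorem IsChunk.eq_of_flatten_eq {S T : List (List M)} (hS : ∀ c ∈ S, IsChunk X Y c)
    (hT : ∀ c ∈ T, IsChunk X Y c) (h : S.flatten = T.flatten) : S = T := by
  induction S generalizing T with
  | nil =>
    obtain _ | ⟨_ | ⟨d', cs'⟩, T⟩ := T
    · rfl
    · exact (hT [] List.mem_cons_self).elim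
    · simp at h
  | cons c S ih =>
    obtain _ | ⟨d, cs⟩ := c
    · exact (hS [] List.mem_cons_self).elim
    obtain _ | ⟨_ | ⟨d', cs'⟩, T⟩ := T
    · simp at h
    · exact (hT [] List.mem_cons_self).elim
    simp only [List.flatten_cons, List.cons_append, List.cons.injEq] at h
    obtain ⟨rfl, h⟩ := h
    have hS' := fun c hc => hS c (List.mem_cons_of_mem _ hc)
    have hT' := fun c hc => hT c (List.mem_cons_of_mem _ hc)
    obtain ⟨rfl, h⟩ := List.eq_of_append_eq_append_of_forall_mem
      (hS _ List.mem_cons_self).2 (hT _ List.mem_cons_self).2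
      (IsChunk.head?_flatten_notMem hS') (IsChunk.head?_flatten_notMem hT') h
    rw [ih hS' hT' (List.append_cancel_left h)]

variable [Monoid M]

def IsCode (X : Set M) : Prop :=
  Set.InjOn List.prod {s : List M | ∀ x ∈ s, x ∈ X}

theorem IsChunk.prod_mem {c : List M} (hc : IsChunk X Y c) :
    c.prod ∈ (X \ Y) * (Submonoid.closure Y : Set M) := by
  obtain _ | ⟨d, cs⟩ := c
  · exact hc.elim
  · exact Set.mul_mem_mul hc.1
      (Submonoid.list_prod_mem _ fun x hx => Submonoid.subset_closure (hc.2 x hx))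

theorem IsChunk.exists_map_prod_eq {s : List M}
    (hs : ∀ z ∈ s, z ∈ (X \ Y) * (Submonoid.closure Y : Set M)) :
    ∃ S : List (List M), (∀ c ∈ S, IsChunk X Y c) ∧ S.map List.prod = s := by
  induction s with
  | nil => exact ⟨[], by simp, rfl⟩
  | cons z s ih =>
    obtain ⟨S, hS, rfl⟩ := ih fun x hx => hs x (List.mem_cons_of_mem z hx)
    obtain ⟨d, hd, u, hu, rfl⟩ := hs z List.mem_cons_self
    obtain ⟨cs, hcs, rfl⟩ := Submonoid.exists_list_of_mem_closure hu
    exact ⟨(d :: cs) :: S, by simpa using ⟨⟨hd, hcs⟩, hS⟩, by simp⟩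

theorem IsChunk.exists_flatten_prod_eq {v : M}
    (hv : v ∈ Submonoid.closure ((X \ Y) * (Submonoid.closure Y : Set M))) :
    ∃ S : List (List M), (∀ c ∈ S, IsChunk X Y c) ∧ S.flatten.prod = v := by
  obtain ⟨s, hs, rfl⟩ := Submonoid.exists_list_of_mem_closure hv
  obtain ⟨S, hS, rfl⟩ := IsChunk.exists_map_prod_eq hs
  exact ⟨S, hS, List.prod_flatten⟩

theorem exists_prod_mul_eq_of_mem_closure {w : M} (hw : w ∈ Submonoid.closure X) :
    ∃ p : List M, (∀ x ∈ p, x ∈ Y) ∧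
      ∃ v ∈ Submonoid.closure ((X \ Y) * (Submonoid.closure Y : Set M)), w = p.prod * v := by
  obtain ⟨s, hs, rfl⟩ := Submonoid.exists_list_of_mem_closure hw
  obtain ⟨p, S, hp, hS, rfl⟩ := IsChunk.exists_append_flatten_of_forall_mem (Y := Y) hs
  refine ⟨p, hp, S.flatten.prod, ?_, List.prod_append⟩
  rw [List.prod_flatten]
  exact Submonoid.list_prod_mem _ fun x hx => by
    obtain ⟨c, hc, rfl⟩ := List.mem_map.1 hx
    exact Submonoid.subset_closure (hS c hc).prod_mem

theorem closure_sdiff_mul_closure_le (hXY : Y ⊆ X) :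
    Submonoid.closure ((X \ Y) * (Submonoid.closure Y : Set M)) ≤ Submonoid.closure X := by
  refine Submonoid.closure_le.2 ?_
  rintro _ ⟨d, hd, u, hu, rfl⟩
  exact mul_mem (Submonoid.subset_closure hd.1) (Submonoid.closure_mono hXY hu)

theorem IsCode.sdiff_mul_closure (hX : IsCode X) (hXY : Y ⊆ X) :
    IsCode ((X \ Y) * (Submonoid.closure Y : Set M)) := by
  intro s hs t ht h
  obtain ⟨S, hS, rfl⟩ := IsChunk.exists_map_prod_eq hs
  obtain ⟨T, hT, rfl⟩ := IsChunk.exists_map_prod_eq ht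
  have hflat : S.flatten = T.flatten :=
    hX (IsChunk.forall_mem_append_flatten (p := []) hXY (by simp) hS)
      (IsChunk.forall_mem_append_flatten (p := []) hXY (by simp) hT)
      (by simpa only [List.nil_append, List.prod_flatten] using h)
  rw [IsChunk.eq_of_flatten_eq hS hT hflat]

theorem IsCode.eq_of_prod_mul_eq (hX : IsCode X) (hXY : Y ⊆ X) {p q : List M} {v w : M}
    (hp : ∀ x ∈ p, x ∈ Y) (hq : ∀ x ∈ q, x ∈ Y)
    (hv : v ∈ Submonoid.closure ((X \ Y) * (Submonoid.closure Y : Set M)))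
    (hw : w ∈ Submonoid.closure ((X \ Y) * (Submonoid.closure Y : Set M)))
    (h : p.prod * v = q.prod * w) : p = q ∧ v = w := by
  obtain ⟨V, hV, rfl⟩ := IsChunk.exists_flatten_prod_eq hv
  obtain ⟨W, hW, rfl⟩ := IsChunk.exists_flatten_prod_eq hw
  have hlist : p ++ V.flatten = q ++ W.flatten :=
    hX (IsChunk.forall_mem_append_flatten hXY hp hV) (IsChunk.forall_mem_append_flatten hXY hq hW)
      (by simpa only [List.prod_append] using h)
  obtain ⟨rfl, hflat⟩ := List.eq_of_append_eq_append_of_forall_mem hp hq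
    (IsChunk.head?_flatten_notMem hV) (IsChunk.head?_flatten_notMem hW) hlist
  exact ⟨rfl, by rw [hflat]⟩

end Code

namespace FreeMonoid

variable {A : Type*} (ω : A → ℕ)

@[simp]
theorem wt_one : (1 : FreeMonoid A).wt ω = 0 := rfl

@[simp]
theorem wt_of (a : A) : (of a).wt ω = ω a := by
  simp [wt]

@[simp]
theorem wt_mul (x y : FreeMonoid A) : (x * y).wt ω = x.wt ω + y.wt ω := by
  simp [wt]

end FreeMonoid

section Lazard

variable {A : Type*} {ω : A → ℕ}

theorem lazardC_subset_lazardZ (n : ℕ) : lazardC ω n ⊆ lazardZ ω n := fun _ h => h.1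

theorem lazardZ_succ {n : ℕ} (hn : 1 ≤ n) :
    lazardZ ω (n + 1) =
      (lazardZ ω n \ lazardC ω n) * (Submonoid.closure (lazardC ω n) : Set (FreeMonoid A)) := by
  obtain ⟨k, rfl⟩ := Nat.exists_eq_add_of_le' hn
  ext w
  simp [lazardZ, lazardC, Set.mem_mul, eq_comm, and_assoc]

theorem isCode_range_of : IsCode (Set.range (FreeMonoid.of : A → FreeMonoid A)) := by
  have hletters : ∀ s : List (FreeMonoid A), (∀ x ∈ s, x ∈ Set.range FreeMonoid.of) →
      s = s.prod.toList.map FreeMonoid.of := by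
    intro s hs
    induction s with
    | nil => rfl
    | cons x s ih =>
      obtain ⟨a, rfl⟩ := hs x List.mem_cons_self
      simpa using ih fun y hy => hs y (List.mem_cons_of_mem _ hy)
  intro s hs t ht h
  rw [hletters s hs, hletters t ht, h]

theorem isCode_lazardZ {n : ℕ} (hn : 1 ≤ n) : IsCode (lazardZ ω n) := by
  induction n, hn using Nat.le_induction with
  | base => exact isCode_range_of
  | succ n hn ih =>
    rw [lazardZ_succ hn]
    exact ih.sdiff_mul_closure (lazardC_subset_lazardZ n)

theorem closure_lazardZ_le {n m : ℕ} (hn : 1 ≤ n) (hnm : n ≤ m) :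
    Submonoid.closure (lazardZ ω m) ≤ Submonoid.closure (lazardZ ω n) := by
  induction m, hnm using Nat.le_induction with
  | base => exact le_rfl
  | succ m hnm ih =>
    rw [lazardZ_succ (hn.trans hnm)]
    exact (closure_sdiff_mul_closure_le (lazardC_subset_lazardZ m)).trans ih

theorem le_wt_of_mem_lazardZ (hω : ∀ a, 1 ≤ ω a) {n : ℕ} (hn : 1 ≤ n) {z : FreeMonoid A}
    (hz : z ∈ lazardZ ω n) : n ≤ z.wt ω := by
  induction n, hn using Nat.le_induction generalizing z with
  | base =>
    obtain ⟨a, rfl⟩ := hz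
    simpa using hω a
  | succ n hn ih =>
    rw [lazardZ_succ hn] at hz
    obtain ⟨d, ⟨hdZ, hdC⟩, u, -, rfl⟩ := hz
    have hd : d.wt ω ≠ n := fun h => hdC ⟨hdZ, h⟩
    have := ih hdZ
    rw [FreeMonoid.wt_mul]
    omega

theorem eq_one_or_le_wt_of_mem_closure_lazardZ (hω : ∀ a, 1 ≤ ω a) {n : ℕ} (hn : 1 ≤ n)
    {w : FreeMonoid A} (hw : w ∈ Submonoid.closure (lazardZ ω n)) : w = 1 ∨ n ≤ w.wt ω := by
  induction hw using Submonoid.closure_induction with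
  | mem z hz => exact Or.inr (le_wt_of_mem_lazardZ hω hn hz)
  | one => exact Or.inl rfl
  | mul x y _ _ hx hy =>
    rcases hx with rfl | hx
    · simpa using hy
    · exact Or.inr (by rw [FreeMonoid.wt_mul]; omega)

def IsLazardFactorization (ω : A → ℕ) (n : ℕ) (w : FreeMonoid A) (l : List (FreeMonoid A)) :
    Prop :=
  (∀ u ∈ l, ∃ m, n ≤ m ∧ u ∈ lazardC ω m) ∧ l.Pairwise (fun u v => u.wt ω ≤ v.wt ω) ∧
    l.prod = w

theorem existsUnique_isLazardFactorization_one {n : ℕ} (hn : 1 ≤ n) :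
    ∃! l, IsLazardFactorization ω n 1 l := by
  refine ⟨[], ⟨by simp, List.Pairwise.nil, rfl⟩, ?_⟩
  rintro (_ | ⟨u, l⟩) ⟨hl, -, hprod⟩
  · rfl
  obtain ⟨m, hm, -, hu⟩ := hl u List.mem_cons_self
  have := congrArg (FreeMonoid.wt ω) hprod
  rw [List.prod_cons, FreeMonoid.wt_mul, hu, FreeMonoid.wt_one] at this
  omega

theorem isLazardFactorization_prod_mul_iff {n : ℕ} (hn : 1 ≤ n) {p : List (FreeMonoid A)}
    (hp : ∀ x ∈ p, x ∈ lazardC ω n) {v : FreeMonoid A}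
    (hv : v ∈ Submonoid.closure (lazardZ ω (n + 1))) {l : List (FreeMonoid A)} :
    IsLazardFactorization ω n (p.prod * v) l ↔
      ∃ r, l = p ++ r ∧ IsLazardFactorization ω (n + 1) v r := by
  constructor
  · rintro ⟨hl, hsorted, hprod⟩
    obtain ⟨p', r, rfl, hp', hr⟩ := List.exists_eq_append_of_pairwise_le hsorted fun u hu => by
      obtain ⟨m, hm, hum⟩ := hl u hu
      exact hum.2 ▸ hm
    have hp'C : ∀ x ∈ p', x ∈ lazardC ω n := fun x hx => by
      obtain ⟨m, -, hxm⟩ := hl x (List.mem_append_left r hx)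
      obtain rfl : m = n := hxm.2.symm.trans (hp' x hx)
      exact hxm
    have hrl : ∀ u ∈ r, ∃ m, n + 1 ≤ m ∧ u ∈ lazardC ω m := fun u hu => by
      obtain ⟨m, -, hum⟩ := hl u (List.mem_append_right p' hu)
      exact ⟨m, hum.2 ▸ hr u hu, hum⟩
    have hrv : r.prod ∈ Submonoid.closure (lazardZ ω (n + 1)) :=
      Submonoid.list_prod_mem _ fun u hu => by
        obtain ⟨m, hm, hum⟩ := hrl u hu
        exact closure_lazardZ_le (by omega) hm (Submonoid.subset_closure hum.1)
    rw [lazardZ_succ hn] at hv hrv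
    obtain ⟨rfl, rfl⟩ := (isCode_lazardZ hn).eq_of_prod_mul_eq (lazardC_subset_lazardZ n)
      hp'C hp hrv hv (by rw [← List.prod_append, hprod])
    exact ⟨r, rfl, hrl, hsorted.sublist (List.sublist_append_right _ _), rfl⟩
  · rintro ⟨r, rfl, hl, hsorted, rfl⟩
    refine ⟨fun u hu => ?_, List.pairwise_append.2 ⟨?_, hsorted, fun a ha b hb => ?_⟩,
      List.prod_append⟩
    · obtain hu | hu := List.mem_append.1 hu
      · exact ⟨n, le_rfl, hp u hu⟩
      · obtain ⟨m, hm, hum⟩ := hl u hu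
        exact ⟨m, by omega, hum⟩
    · exact List.pairwise_of_forall_mem_list fun a ha b hb => by rw [(hp a ha).2, (hp b hb).2]
    · obtain ⟨m, hm, hbm⟩ := hl b hb
      rw [(hp a ha).2, hbm.2]
      omega

theorem existsUnique_isLazardFactorization (hω : ∀ a, 1 ≤ ω a) {n : ℕ} (hn : 1 ≤ n)
    {w : FreeMonoid A} (hw : w ∈ Submonoid.closure (lazardZ ω n)) :
    ∃! l, IsLazardFactorization ω n w l := by
  obtain ⟨k, hk⟩ : ∃ k, w.wt ω < n + k := ⟨w.wt ω + 1, by omega⟩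
  induction k generalizing n w with
  | zero =>
    obtain rfl : w = 1 := (eq_one_or_le_wt_of_mem_closure_lazardZ hω hn hw).resolve_right (by omega)
    exact existsUnique_isLazardFactorization_one hn
  | succ k ih =>
    rcases eq_or_ne w 1 with rfl | h1
    · exact existsUnique_isLazardFactorization_one hn
    obtain ⟨p, hp, v, hv, rfl⟩ := exists_prod_mul_eq_of_mem_closure (Y := lazardC ω n) hw
    rw [← lazardZ_succ hn] at hv
    rw [FreeMonoid.wt_mul] at hk
    obtain ⟨r, hr, huniq⟩ := ih (by omega) hv (by omega)
    refine ⟨p ++ r, (isLazardFactorization_prod_mul_iff hn hp hv).2 ⟨r, rfl, hr⟩, fun l hl => ?_⟩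
    obtain ⟨r', rfl, hr'⟩ := (isLazardFactorization_prod_mul_iff hn hp hv).1 hl
    rw [huniq r' hr']

end Lazard

/-- The Lazard right composition `F(A, ω) = (C_n)` is a factorization of the
free monoid `A*`: every word factors uniquely as a product of elements of
`⋃ₙ Cₙ` with weakly increasing weights. -/
theorem lazard_right_composition_factorization {A : Type*} (ω : A → ℕ)
    (hω : ∀ a, 1 ≤ ω a) (w : FreeMonoid A) :
    ∃! l : List (FreeMonoid A),
      (∀ u ∈ l, ∃ n, 1 ≤ n ∧ u ∈ lazardC ω n) ∧
      (l.map (FreeMonoid.wt ω)).Chain' (· ≤ ·) ∧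
      l.prod = w := by
  have hw : w ∈ Submonoid.closure (lazardZ ω 1) := by
    simp [lazardZ, FreeMonoid.closure_range_of]
  refine (existsUnique_congr fun l => ?_).1 (existsUnique_isLazardFactorization hω le_rfl hw)
  change _ ↔ _ ∧ List.IsChain _ _ ∧ _
  rw [List.isChain_iff_pairwise, List.pairwise_map]
  rfl
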